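/- arXiv:2502.11615 — 2 statements merged into one kernel-verified Lean document; each statement's English description precedes it below -/
import Mathlib

section
/- Let X and Y be metric spaces with finite supports. If S ⊆ X × Y is a correspondence (every x ∈ X appears as a first coordinate of some element of S and every y ∈ Y appears as a second coordinate) and the distortion of S is strictly less than the separation of X, then there exists an injection f : X → Y whose graph is contained in S. -/
/-- The distortion of a relation `S ⊆ X × Y` between metric spaces. -/
noncomputable def relDis {X Y : Type*} [MetricSpace X] [MetricSpace Y] (S : Set (X × Y)) : ℝ :=
  sSup {v | ∃ p ∈ S, ∃ q ∈ S, v = |dist p.1 q.1 - dist p.2 q.2|}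

/-- The separation of a metric space: the infimum of distances between distinct points. -/
noncomputable def sep (X : Type*) [MetricSpace X] : ℝ :=
  sInf {v | ∃ x y : X, x ≠ y ∧ v = dist x y}

/-- `S` is a correspondence between `X` and `Y`. -/
def IsCorrespondence {X Y : Type*} (S : Set (X × Y)) : Prop :=
  (∀ x : X, ∃ y : Y, (x, y) ∈ S) ∧ ∀ y : Y, ∃ x : X, (x, y) ∈ S

/-!
Choose for every `x` some `f x` with `(x, f x) ∈ S`. If `f a = f b` with `a ≠ b`, the pairs
`(a, f a)` and `(b, f b)` have distortion `dist a b ≥ sep X > dis S`, which is impossible.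
-/

section Distortion

variable {X Y : Type*} [MetricSpace X] [MetricSpace Y]

theorem sep_le_dist {x y : X} (h : x ≠ y) : sep X ≤ dist x y :=
  csInf_le ⟨0, by rintro v ⟨x, y, _, rfl⟩; positivity⟩ ⟨x, y, h, rfl⟩

theorem abs_dist_sub_dist_le_relDis {S : Set (X × Y)} (hS : S.Finite) {p q : X × Y}
    (hp : p ∈ S) (hq : q ∈ S) : |dist p.1 q.1 - dist p.2 q.2| ≤ relDis S := by
  -- Without finiteness the distortion set may be unbounded, and then `relDis S = 0`.
  have hfin : {v | ∃ p ∈ S, ∃ q ∈ S, v = |dist p.1 q.1 - dist p.2 q.2|}.Finite :=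
    (hS.image2 (fun p q : X × Y => |dist p.1 q.1 - dist p.2 q.2|) hS).subset
      fun _ ⟨p, hp, q, hq, hv⟩ => ⟨p, hp, q, hq, hv.symm⟩
  exact le_csSup hfin.bddAbove ⟨p, hp, q, hq, rfl⟩

theorem Function.Injective.of_relDis_lt_sep {S : Set (X × Y)} (hS : S.Finite)
    (hdis : relDis S < sep X) {f : X → Y} (hf : ∀ x, (x, f x) ∈ S) : Function.Injective f := by
  intro a b hab
  by_contra hne
  have hdist : dist a b ≤ relDis S := by
    simpa [hab] using abs_dist_sub_dist_le_relDis hS (hf a) (hf b)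
  linarith [sep_le_dist hne]

end Distortion

theorem stmt1_general {X Y : Type*} [MetricSpace X] [MetricSpace Y]
    [Fintype X] [Fintype Y]
    (S : Set (X × Y)) (hS : IsCorrespondence S)
    (hdis : relDis S < sep X) :
    ∃ f : X → Y, Function.Injective f ∧ ∀ x : X, (x, f x) ∈ S := by
  choose f hf using hS.1
  exact ⟨f, .of_relDis_lt_sep (Set.toFinite S) hdis hf, hf⟩

theorem stmt1 {X Y : Type*} [MetricSpace X] [MetricSpace Y]
    [Fintype X] [Fintype Y] [Nonempty X] [Nonempty Y]
    (S : Set (X × Y)) (hS : IsCorrespondence S)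
    (hdis : relDis S < sep X) :
    ∃ f : X → Y, Function.Injective f ∧ ∀ x : X, (x, f x) ∈ S :=
  stmt1_general S hS hdis
end

section
/- Let a metric space X be the union of a sequence {F_k}_{k∈ℕ} of closed subspaces with dim F_k ≤ n for every k. Then dim X ≤ n. -/
open Set Metric

/-- The covering dimension of `X` is at most `n`. -/
def CovDimLE (X : Type*) [TopologicalSpace X] (n : ℕ) : Prop :=
  ∀ U : Set (Set X), (∀ u ∈ U, IsOpen u) → ⋃₀ U = Set.univ →
    ∃ V : Set (Set X), (∀ v ∈ V, IsOpen v) ∧ ⋃₀ V = Set.univ ∧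
      (∀ v ∈ V, ∃ u ∈ U, v ⊆ u) ∧ ∀ x : X, {v ∈ V | x ∈ v}.encard ≤ (n : ℕ∞) + 1

/-- One step of the shrinking construction: shrink an open cover `W` (with closures)
so that the new cover has order `≤ n+1` at every point of the closed set `F`. -/
lemma covdim_step {X : Type*} [MetricSpace X] (n : ℕ) {ι : Type*} [Nonempty ι] (F : Set X)
    (hdim : CovDimLE ↥F n)
    (W : ι → Set X) (hWo : ∀ s, IsOpen (W s)) (hWc : (⋃ s, W s) = univ)
    (hpf : ∀ x : X, {s | x ∈ W s}.Finite) (hF : IsClosed F) :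
    ∃ W' : ι → Set X, (∀ s, IsOpen (W' s)) ∧ (⋃ s, W' s) = univ ∧
      (∀ s, closure (W' s) ⊆ W s) ∧
      (∀ x ∈ F, {s | x ∈ W' s}.encard ≤ (n : ℕ∞) + 1) := by
  -- shrink with closures
  obtain ⟨W'', hW''c, hW''o, hW''cl⟩ :=
    exists_subset_iUnion_closure_subset (u := W) isClosed_univ hWo (fun x _ => hpf x)
      (hWc ▸ subset_rfl)
  have hW''cov : ∀ x : X, ∃ s, x ∈ W'' s := by
    intro x
    have := hW''c (mem_univ x)
    simpa [mem_iUnion] using this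
  -- the induced cover of the subspace F
  set 𝒰 : Set (Set ↥F) := {A | ∃ s, A = Subtype.val ⁻¹' (W'' s)} with h𝒰
  have h𝒰o : ∀ u ∈ 𝒰, IsOpen u := by
    rintro A ⟨s, rfl⟩
    exact (hW''o s).preimage continuous_subtype_val
  have h𝒰c : ⋃₀ 𝒰 = univ := by
    apply eq_univ_of_forall
    intro x
    obtain ⟨s, hs⟩ := hW''cov x.1
    exact ⟨Subtype.val ⁻¹' (W'' s), ⟨s, rfl⟩, hs⟩
  obtain ⟨𝒱, h𝒱o, h𝒱c, h𝒱ref, h𝒱ord⟩ := hdim 𝒰 h𝒰o h𝒰c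
  -- choose for each element of 𝒱 an index and an open set in X inducing it
  have hch : ∀ v : Set ↥F, ∃ (s : ι) (Q : Set X), v ∈ 𝒱 → IsOpen Q ∧
      Subtype.val ⁻¹' Q = v ∧ v ⊆ Subtype.val ⁻¹' (W'' s) := by
    intro v
    by_cases hv : v ∈ 𝒱
    · obtain ⟨u, hu, hvu⟩ := h𝒱ref v hv
      obtain ⟨s, rfl⟩ := hu
      obtain ⟨Q, hQo, hQ⟩ := isOpen_induced_iff.mp (h𝒱o v hv)
      exact ⟨s, Q, fun _ => ⟨hQo, hQ, hvu⟩⟩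
    · exact ⟨Classical.arbitrary _, ∅, fun h => absurd h hv⟩
  choose sv Qv hprop using hch
  have hQo : ∀ v ∈ 𝒱, IsOpen (Qv v) := fun v hv => (hprop v hv).1
  have hQv : ∀ v ∈ 𝒱, Subtype.val ⁻¹' (Qv v) = v := fun v hv => (hprop v hv).2.1
  have hsub : ∀ v ∈ 𝒱, v ⊆ Subtype.val ⁻¹' (W'' (sv v)) := fun v hv => (hprop v hv).2.2
  -- the modified cover
  set G : ι → Set X := fun s =>
    ⋃ (v : Set ↥F) (hv : v ∈ 𝒱) (_ : sv v = s), (Qv v ∩ W'' s) with hG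
  have hGo : ∀ s, IsOpen (G s) := by
    intro s
    exact isOpen_iUnion fun v => isOpen_iUnion fun hv => isOpen_iUnion fun _ =>
      (hQo v hv).inter (hW''o s)
  have hGsub : ∀ s, G s ⊆ W'' s := by
    intro s
    simp only [hG, iUnion_subset_iff]
    intro v hv _
    exact inter_subset_right
  refine ⟨fun s => G s ∪ (W'' s \ F), ?_, ?_, ?_, ?_⟩
  · intro s
    exact (hGo s).union ((hW''o s).sdiff hF)
  · apply eq_univ_of_forall
    intro x
    by_cases hx : x ∈ F
    · obtain ⟨v, hv, hxv⟩ : ∃ v ∈ 𝒱, (⟨x, hx⟩ : ↥F) ∈ v := by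
        have : (⟨x, hx⟩ : ↥F) ∈ ⋃₀ 𝒱 := h𝒱c ▸ mem_univ _
        simpa using this
      have hxQ : x ∈ Qv v := by
        rw [← hQv v hv] at hxv
        exact hxv
      have hxW : x ∈ W'' (sv v) := hsub v hv hxv
      refine mem_iUnion.2 ⟨sv v, Or.inl ?_⟩
      simp only [hG, mem_iUnion]
      exact ⟨v, hv, rfl, hxQ, hxW⟩
    · obtain ⟨s, hs⟩ := hW''cov x
      exact mem_iUnion.2 ⟨s, Or.inr ⟨hs, hx⟩⟩
  · intro s
    have : G s ∪ (W'' s \ F) ⊆ W'' s := union_subset (hGsub s) diff_subset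
    exact (closure_mono this).trans (hW''cl s)
  · intro x hx
    have key : ∀ s : ι, x ∈ G s ∪ (W'' s \ F) →
        ∃ v : Set ↥F, v ∈ 𝒱 ∧ sv v = s ∧ (⟨x, hx⟩ : ↥F) ∈ v := by
      intro s hs
      rcases hs with hs | hs
      · simp only [hG, mem_iUnion] at hs
        obtain ⟨v, hv, he, hxQ, _⟩ := hs
        refine ⟨v, hv, he, ?_⟩
        rw [← hQv v hv]
        exact hxQ
      · exact absurd hx hs.2
    classical
    have hmap : MapsTo (fun s : ι => if h : x ∈ G s ∪ (W'' s \ F) then (key s h).choose else ∅)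
        {s | x ∈ G s ∪ (W'' s \ F)} {v ∈ 𝒱 | (⟨x, hx⟩ : ↥F) ∈ v} := by
      intro s hs
      simp only [mem_setOf_eq] at hs
      simp only [dif_pos hs]
      obtain ⟨hv, _, hxv⟩ := (key s hs).choose_spec
      exact ⟨hv, hxv⟩
    have hinj : InjOn (fun s : ι => if h : x ∈ G s ∪ (W'' s \ F) then (key s h).choose else ∅)
        {s | x ∈ G s ∪ (W'' s \ F)} := by
      intro s₁ h₁ s₂ h₂ he
      simp only [mem_setOf_eq] at h₁ h₂
      simp only [dif_pos h₁, dif_pos h₂] at he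
      obtain ⟨hv₁, he₁, _⟩ := (key s₁ h₁).choose_spec
      obtain ⟨hv₂, he₂, _⟩ := (key s₂ h₂).choose_spec
      rw [← he₁, ← he₂, he]
    calc {s | x ∈ G s ∪ (W'' s \ F)}.encard
        ≤ {v ∈ 𝒱 | (⟨x, hx⟩ : ↥F) ∈ v}.encard := Set.encard_le_encard_of_injOn hmap hinj
      _ ≤ (n : ℕ∞) + 1 := h𝒱ord _

/-- The limit of the iterated shrinking: a locally finite closed cover of order `≤ n+1`. -/
lemma covdim_limit {X : Type*} [MetricSpace X] (n : ℕ) {ι : Type*} [Nonempty ι]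
    (F : ℕ → Set X) (hcl : ∀ k, IsClosed (F k)) (hun : (⋃ k, F k) = univ)
    (hdim : ∀ k, CovDimLE ↥(F k) n)
    (W0 : ι → Set X) (hW0o : ∀ s, IsOpen (W0 s)) (hW0c : (⋃ s, W0 s) = univ)
    (hW0lf : LocallyFinite W0) :
    ∃ V : ι → Set X, (∀ s, IsClosed (V s)) ∧ (∀ s, V s ⊆ W0 s) ∧
      (⋃ s, V s) = univ ∧ ∀ x, {s | x ∈ V s}.encard ≤ (n : ℕ∞) + 1 := by
  classical
  have hpf : ∀ x : X, {s | x ∈ W0 s}.Finite := hW0lf.point_finite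
  let P : (ι → Set X) → Prop := fun W =>
    (∀ s, IsOpen (W s)) ∧ (⋃ s, W s) = univ ∧ ∀ s, W s ⊆ W0 s
  have hstep : ∀ (k : ℕ) (W : ι → Set X), P W → ∃ W',
      P W' ∧ (∀ s, closure (W' s) ⊆ W s) ∧
      ∀ x ∈ F k, {s | x ∈ W' s}.encard ≤ (n : ℕ∞) + 1 := by
    rintro k W ⟨h1, h2, h3⟩
    obtain ⟨W', o, c, cl, ord⟩ := covdim_step n (F k) (hdim k) W h1 h2
      (fun x => (hpf x).subset fun s hs => h3 s hs) (hcl k)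
    exact ⟨W', ⟨o, c, fun s => (subset_closure.trans (cl s)).trans (h3 s)⟩, cl, ord⟩
  let step : ℕ → (ι → Set X) → (ι → Set X) := fun k W =>
    if h : P W then (hstep k W h).choose else W0
  let Wseq : ℕ → ι → Set X := fun k => Nat.rec W0 (fun k W => step k W) k
  have hWP : ∀ k, P (Wseq k) := by
    intro k
    induction k with
    | zero => exact ⟨hW0o, hW0c, fun s => subset_rfl⟩
    | succ k ih =>
      show P (step k (Wseq k))
      simp only [step, dif_pos ih]
      exact (hstep k (Wseq k) ih).choose_spec.1
  have hWsucc : ∀ k, (∀ s, closure (Wseq (k+1) s) ⊆ Wseq k s) ∧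
      ∀ x ∈ F k, {s | x ∈ Wseq (k+1) s}.encard ≤ (n : ℕ∞) + 1 := by
    intro k
    have e : Wseq (k+1) = (hstep k (Wseq k) (hWP k)).choose := by
      show step k (Wseq k) = _
      simp only [step, dif_pos (hWP k)]
    rw [e]
    exact ⟨(hstep k (Wseq k) (hWP k)).choose_spec.2.1,
      (hstep k (Wseq k) (hWP k)).choose_spec.2.2⟩
  have hmono : ∀ k s, Wseq (k+1) s ⊆ Wseq k s :=
    fun k s => subset_closure.trans ((hWsucc k).1 s)
  have hle : ∀ i j, i ≤ j → ∀ s, Wseq j s ⊆ Wseq i s := by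
    intro i j hij s
    induction hij with
    | refl => exact subset_rfl
    | step h ih => exact (hmono _ s).trans ih
  set V : ι → Set X := fun s => ⋂ k, Wseq k s with hV
  have hVW : ∀ k s, V s ⊆ Wseq k s := fun k s => iInter_subset _ k
  have hVsub : ∀ s, V s ⊆ W0 s := fun s => hVW 0 s
  have hVcl : ∀ s, IsClosed (V s) := by
    intro s
    have e : V s = ⋂ k, closure (Wseq (k+1) s) := by
      apply subset_antisymm
      · exact subset_iInter fun k => (hVW (k+1) s).trans subset_closure
      · exact subset_iInter fun k => (iInter_subset _ k).trans ((hWsucc k).1 s)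
    rw [e]
    exact isClosed_iInter fun k => isClosed_closure
  have hVcov : (⋃ s, V s) = univ := by
    apply eq_univ_of_forall
    intro x
    by_contra hcon
    simp only [mem_iUnion, not_exists] at hcon
    have hex : ∀ s, ∃ k, x ∉ Wseq k s := by
      intro s
      by_contra h
      push_neg at h
      exact hcon s (mem_iInter.2 h)
    choose κ hκ using hex
    set t := (hpf x).toFinset with ht
    set K := t.sup κ with hK
    obtain ⟨s, hs⟩ : ∃ s, x ∈ Wseq K s := by
      have := (hWP K).2.1
      rw [eq_univ_iff_forall] at this
      simpa [mem_iUnion] using this x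
    have hst : s ∈ t := (hpf x).mem_toFinset.2 ((hWP K).2.2 s hs)
    exact hκ s (hle (κ s) K (Finset.le_sup hst) s hs)
  have hVord : ∀ x, {s | x ∈ V s}.encard ≤ (n : ℕ∞) + 1 := by
    intro x
    obtain ⟨k, hk⟩ : ∃ k, x ∈ F k := by
      have := hun ▸ mem_univ x
      simpa [mem_iUnion] using this
    exact le_trans (Set.encard_le_encard fun s hs => hVW (k+1) s hs) ((hWsucc k).2 x hk)
  exact ⟨V, hVcl, hVsub, hVcov, hVord⟩

/-- Metric swelling: expand a locally finite closed family of order `≤ n+1` to an open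
family of order `≤ n+1`. -/
lemma covdim_swell {X : Type*} [MetricSpace X] (n : ℕ) {ι : Type*}
    (V : ι → Set X) (W0 : ι → Set X) (hW0o : ∀ s, IsOpen (W0 s))
    (hVcl : ∀ s, IsClosed (V s)) (hVsub : ∀ s, V s ⊆ W0 s)
    (hVlf : LocallyFinite V)
    (hVord : ∀ x, {s | x ∈ V s}.encard ≤ (n : ℕ∞) + 1) :
    ∃ O : ι → Set X, (∀ s, IsOpen (O s)) ∧ (∀ s, V s ⊆ O s) ∧ (∀ s, O s ⊆ W0 s) ∧
      ∀ x, {s | x ∈ O s}.encard ≤ (n : ℕ∞) + 1 := by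
  classical
  have hr : ∀ (s : ι) (x : X), x ∈ V s → ∃ r : ℝ, 0 < r ∧
      ball x (3*r) ⊆ W0 s ∧ ∀ t, x ∉ V t → Disjoint (ball x (3*r)) (V t) := by
    intro s x hx
    set B : Set X := ⋃ t : {t : ι // x ∉ V t}, V t.1 with hB
    have hBcl : IsClosed B :=
      (hVlf.comp_injective Subtype.val_injective).isClosed_iUnion fun t => hVcl t.1
    have hxB : x ∉ B := by
      rw [hB]
      simp only [mem_iUnion]
      rintro ⟨⟨t, ht⟩, hmem⟩
      exact ht hmem
    have hop : IsOpen (W0 s ∩ Bᶜ) := (hW0o s).inter hBcl.isOpen_compl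
    obtain ⟨ε, hε, hball⟩ := Metric.isOpen_iff.1 hop x ⟨hVsub s hx, hxB⟩
    refine ⟨ε/3, by linarith, ?_, ?_⟩
    · intro y hy
      have : y ∈ ball x ε := by rw [mem_ball] at hy ⊢; linarith
      exact (hball this).1
    · intro t ht
      rw [Set.disjoint_left]
      intro y hy hyt
      have : y ∈ ball x ε := by rw [mem_ball] at hy ⊢; linarith
      exact (hball this).2 (mem_iUnion.2 ⟨⟨t, ht⟩, hyt⟩)
  choose! ρ hρpos hρball hρdisj using hr
  set O : ι → Set X := fun s => ⋃ (x : X) (_ : x ∈ V s), ball x (ρ s x) with hO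
  have hOmem : ∀ s y, y ∈ O s ↔ ∃ x, x ∈ V s ∧ y ∈ ball x (ρ s x) := by
    intro s y
    simp [hO, mem_iUnion]
  refine ⟨O, ?_, ?_, ?_, ?_⟩
  · intro s
    exact isOpen_iUnion fun x => isOpen_iUnion fun _ => isOpen_ball
  · intro s x hx
    exact (hOmem s x).2 ⟨x, hx, mem_ball_self (hρpos s x hx)⟩
  · intro s y hy
    obtain ⟨x, hx, hyx⟩ := (hOmem s y).1 hy
    apply hρball s x hx
    have := hρpos s x hx
    rw [mem_ball] at hyx ⊢
    linarith
  · intro y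
    by_contra hcon
    have h2 : (n : ℕ∞) + 1 + 1 ≤ {s | y ∈ O s}.encard := by
      refine (ENat.add_one_le_iff ?_).2 (lt_of_not_ge hcon)
      have : ((n : ℕ∞) + 1) = ((n + 1 : ℕ) : ℕ∞) := by push_cast; ring
      rw [this]
      exact ENat.coe_ne_top _
    obtain ⟨t, hts, htcard⟩ := Set.exists_subset_encard_eq h2
    have hcast : (n : ℕ∞) + 1 + 1 = ((n + 2 : ℕ) : ℕ∞) := by push_cast; ring
    have htfin : t.Finite := Set.finite_of_encard_eq_coe (htcard.trans hcast)
    have htne : t.Nonempty := by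
      apply Set.nonempty_of_encard_ne_zero
      rw [htcard, hcast]
      exact_mod_cast Nat.succ_ne_zero (n+1)
    have hxy : ∀ s ∈ t, ∃ x, x ∈ V s ∧ y ∈ ball x (ρ s x) := by
      intro s hs
      exact (hOmem s y).1 (hts hs)
    have : Nonempty X := ⟨y⟩
    choose! ξ hξV hξb using hxy
    obtain ⟨s0, hs0f, hmax⟩ := Finset.exists_max_image htfin.toFinset
      (fun s => ρ s (ξ s)) (htfin.toFinset_nonempty.2 htne)
    have hs0t : s0 ∈ t := htfin.mem_toFinset.1 hs0f
    have hpos0 := hρpos s0 (ξ s0) (hξV s0 hs0t)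
    have hkey : ∀ s ∈ t, ξ s0 ∈ V s := by
      intro s hs
      by_contra hns
      have hd := hρdisj s0 (ξ s0) (hξV s0 hs0t) s hns
      have h1 : dist y (ξ s0) < ρ s0 (ξ s0) := mem_ball.1 (hξb s0 hs0t)
      have h2' : dist y (ξ s) < ρ s (ξ s) := mem_ball.1 (hξb s hs)
      have hρle : ρ s (ξ s) ≤ ρ s0 (ξ s0) := hmax s (htfin.mem_toFinset.2 hs)
      have hmem : ξ s ∈ ball (ξ s0) (3 * ρ s0 (ξ s0)) := by
        rw [mem_ball]
        have htri : dist (ξ s) (ξ s0) ≤ dist (ξ s) y + dist y (ξ s0) := dist_triangle _ _ _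
        rw [dist_comm (ξ s) y] at htri
        linarith
      exact Set.disjoint_left.1 hd hmem (hξV s hs)
    have hsub2 : t ⊆ {s | ξ s0 ∈ V s} := hkey
    have hfin : ((n : ℕ∞) + 1) + 1 ≤ (n : ℕ∞) + 1 :=
      htcard ▸ le_trans (Set.encard_le_encard hsub2) (hVord (ξ s0))
    have h3 : ((n + 2 : ℕ) : ℕ∞) ≤ ((n + 1 : ℕ) : ℕ∞) := by
      calc ((n + 2 : ℕ) : ℕ∞) = (n : ℕ∞) + 1 + 1 := by push_cast; ring
        _ ≤ (n : ℕ∞) + 1 := hfin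
        _ = ((n + 1 : ℕ) : ℕ∞) := by push_cast; ring
    exact absurd (Nat.cast_le.1 h3) (by omega)

/-- The countable sum theorem for covering dimension in metric spaces. -/
theorem stmt11 {X : Type*} [MetricSpace X] (n : ℕ) (F : ℕ → Set X)
    (hcl : ∀ k, IsClosed (F k)) (hun : (⋃ k, F k) = Set.univ)
    (hdim : ∀ k, CovDimLE ↥(F k) n) :
    CovDimLE X n := by
  intro U hUo hUc
  by_cases hne : Nonempty X
  · -- `X` is nonempty, so `U` is nonempty as well
    have hUne : Nonempty ↥U := by
      obtain ⟨x⟩ := hne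
      have : x ∈ ⋃₀ U := hUc ▸ mem_univ x
      obtain ⟨u, hu, -⟩ := this
      exact ⟨⟨u, hu⟩⟩
    obtain ⟨W0, hW0o, hW0c, hW0lf, hW0sub⟩ := precise_refinement (fun s : ↥U => (s : Set X))
      (fun s => hUo s s.2) (by rw [← sUnion_eq_iUnion]; exact hUc)
    obtain ⟨V, hVcl, hVsub, hVcov, hVord⟩ :=
      covdim_limit n F hcl hun hdim W0 hW0o hW0c hW0lf
    obtain ⟨O, hOo, hVO, hOW, hOord⟩ :=
      covdim_swell n V W0 hW0o hVcl hVsub (hW0lf.subset hVsub) hVord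
    refine ⟨Set.range O, ?_, ?_, ?_, ?_⟩
    · rintro v ⟨s, rfl⟩
      exact hOo s
    · rw [sUnion_range]
      apply eq_univ_of_forall
      intro x
      obtain ⟨s, hs⟩ := mem_iUnion.1 (hVcov ▸ mem_univ x)
      exact mem_iUnion.2 ⟨s, hVO s hs⟩
    · rintro v ⟨s, rfl⟩
      exact ⟨s, s.2, (hOW s).trans (hW0sub s)⟩
    · intro x
      have hsub2 : {v ∈ Set.range O | x ∈ v} ⊆ O '' {s | x ∈ O s} := by
        rintro v ⟨⟨s, rfl⟩, hx⟩
        exact ⟨s, hx, rfl⟩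
      calc {v ∈ Set.range O | x ∈ v}.encard
          ≤ (O '' {s | x ∈ O s}).encard := Set.encard_le_encard hsub2
        _ ≤ {s | x ∈ O s}.encard := Set.encard_image_le _ _
        _ ≤ (n : ℕ∞) + 1 := hOord x
  · -- `X` is empty
    refine ⟨∅, by simp, ?_, by simp, by simp⟩
    rw [sUnion_empty]
    exact (eq_univ_of_forall fun x => absurd ⟨x⟩ hne).symm ▸ rfl
end
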